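/- arXiv:2311.11490 — 5 statements merged into one kernel-verified Lean document; each statement's English description precedes it below -/
import Mathlib

section
/- Let P > 1 be a finite abelian p-group and G a finite p'-group acting faithfully by automorphisms on P. Let a be an integer with 1 ≤ a ≤ log_p(exp(P)), and let Γ be the set of elements of order exactly p^a in P. Then the number of orbits of G on Γ is at least p^(a-1). -/
/-!
Pick `x` of order `p ^ a` and look at the `p ^ (a - 1)` elements `x ^ (1 + p * k)`,
`k < p ^ (a - 1)`, all of order `p ^ a`. If `g • x ^ m = x ^ n`, then iterating gives
`g ^ j • x ^ m ^ j = x ^ n ^ j`, so `g ^ |G| = 1` yields `m ^ |G| ≡ n ^ |G| (mod p ^ a)`.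
Since `|G|` is prime to `p`, raising to the power `|G|` is injective on residues `≡ 1 (mod p)`
modulo `p ^ a`, hence `m ≡ n (mod p ^ a)`: the chosen elements lie in pairwise distinct orbits.
-/

open Finset MulAction

theorem Monoid.exists_orderOf_eq_of_dvd_exponent {M : Type*} [CommGroup M] [Finite M] {d : ℕ}
    (hd : d ∣ Monoid.exponent M) : ∃ x : M, orderOf x = d := by
  obtain ⟨y, hy⟩ := Monoid.exists_orderOf_eq_exponent (Monoid.ExponentExists.of_finite (G := M))
  exact ⟨y ^ (orderOf y / d), orderOf_pow_orderOf_div (orderOf_pos y).ne' (hy ▸ hd)⟩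

/-- `m ^ N - n ^ N` is `m - n` times a geometric sum `≡ N * m ^ (N - 1) (mod p)`, a unit mod `p`. -/
theorem Nat.ModEq.of_pow {p a N m n : ℕ} (hp : p.Prime) (hN : ¬ p ∣ N)
    (hm : ¬ p ∣ m) (hmn : m ≡ n [MOD p]) (h : m ^ N ≡ n ^ N [MOD p ^ a]) : m ≡ n [MOD p ^ a] := by
  rw [← Int.natCast_modEq_iff, Int.modEq_iff_dvd] at hmn h ⊢
  have hpZ : _root_.Prime (p : ℤ) := Nat.prime_iff_prime_int.mp hp
  have hsum : ¬ (p : ℤ) ∣ ∑ i ∈ range N, (n : ℤ) ^ i * (m : ℤ) ^ (N - 1 - i) := by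
    rw [dvd_geom_sum₂_iff_of_dvd_sub hmn]
    intro hdvd
    rcases hpZ.dvd_or_dvd hdvd with hpN | hpm
    · exact hN (Int.natCast_dvd_natCast.mp hpN)
    · exact hm (Int.natCast_dvd_natCast.mp (hpZ.dvd_of_dvd_pow hpm))
  push_cast at h ⊢
  refine ((hpZ.coprime_iff_not_dvd.mpr hsum).pow_left).dvd_of_dvd_mul_left ?_
  rwa [geom_sum₂_mul]

theorem pow_smul_pow_pow {M P : Type*} [Monoid M] [Monoid P] [MulDistribMulAction M P]
    {g : M} {x : P} {m n : ℕ} (h : g • x ^ m = x ^ n) (j : ℕ) : g ^ j • x ^ m ^ j = x ^ n ^ j := by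
  induction j with
  | zero => simp
  | succ j ih =>
    calc g ^ (j + 1) • x ^ m ^ (j + 1) = g ^ j • (g • x ^ m) ^ m ^ j := by
          rw [pow_succ, mul_smul, pow_succ', pow_mul, smul_pow']
      _ = (g ^ j • x ^ m ^ j) ^ n := by rw [h, ← pow_mul, mul_comm, pow_mul, smul_pow']
      _ = x ^ n ^ (j + 1) := by rw [ih, ← pow_mul, ← pow_succ]

theorem Nat.ModEq.of_smul_pow_eq_pow {G P : Type*} [Group G] [Group P]
    [MulDistribMulAction G P] {p a m n : ℕ} (hp : p.Prime) (hG : ¬ p ∣ Nat.card G) {x : P}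
    (hx : orderOf x = p ^ a) (hm : ¬ p ∣ m) (hmn : m ≡ n [MOD p]) {g : G}
    (h : g • x ^ m = x ^ n) : m ≡ n [MOD p ^ a] := by
  have hpow := pow_smul_pow_pow h (Nat.card G)
  rw [pow_card_eq_one', one_smul, pow_eq_pow_iff_modEq, hx] at hpow
  exact Nat.ModEq.of_pow hp hG hm hmn hpow

theorem Nat.ModEq.of_one_add_mul {p a k l : ℕ} (hp : p ≠ 0)
    (h : 1 + p * k ≡ 1 + p * l [MOD p ^ a]) : k ≡ l [MOD p ^ (a - 1)] := by
  rcases a with _ | a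
  · exact Nat.modEq_one
  · rw [pow_succ'] at h
    exact (Nat.ModEq.mul_left_cancel_iff' hp).mp (Nat.ModEq.add_left_cancel' 1 h)

theorem stmt_4_general (p a : ℕ) (hp : p.Prime)
    (P : Type*) [CommGroup P] [Fintype P]
    (G : Subgroup (MulAut P)) (hG : Nat.Coprime (Nat.card G) p)
    (hexp : p ^ a ∣ Monoid.exponent P) :
    p ^ (a - 1) ≤ Nat.card {ω : MulAction.orbitRel.Quotient G P //
      ∃ x : P, orderOf x = p ^ a ∧ Quotient.mk'' x = ω} := by
  obtain ⟨x, hx⟩ := Monoid.exists_orderOf_eq_of_dvd_exponent hexp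
  have hpG : ¬ p ∣ Nat.card G := (hp.coprime_iff_not_dvd).mp hG.symm
  have hcop (k : ℕ) : Nat.Coprime p (1 + p * k) :=
    (Nat.coprime_add_mul_left_right p 1 k).mpr (Nat.coprime_one_right p)
  have hord (k : ℕ) : orderOf (x ^ (1 + p * k)) = p ^ a :=
    hx ▸ Nat.Coprime.orderOf_pow (hx ▸ (hcop k).pow_left a)
  have hmod (k : ℕ) : 1 + p * k ≡ 1 [MOD p] := by simp [Nat.ModEq]
  let f (k : Fin (p ^ (a - 1))) : {ω : orbitRel.Quotient G P //
      ∃ x : P, orderOf x = p ^ a ∧ Quotient.mk'' x = ω} :=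
    ⟨Quotient.mk'' (x ^ (1 + p * k)), _, hord k, rfl⟩
  have hf : Function.Injective f := by
    intro k l hkl
    obtain ⟨g, hg⟩ :=
      mem_orbit_iff.mp (orbitRel_apply.mp (Quotient.exact (congrArg Subtype.val hkl)))
    have hlk := Nat.ModEq.of_smul_pow_eq_pow hp hpG hx
      ((hp.coprime_iff_not_dvd).mp (hcop l)) ((hmod l).trans (hmod k).symm) hg
    exact Fin.ext ((hlk.of_one_add_mul hp.ne_zero).eq_of_lt_of_lt l.isLt k.isLt).symm
  exact (Nat.card_fin _).ge.trans (Nat.card_le_card_of_injective f hf)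

theorem stmt_4 (p a : ℕ) (hp : p.Prime) (ha : 1 ≤ a)
    (P : Type*) [CommGroup P] [Fintype P] [Nontrivial P] (hP : IsPGroup p P)
    (G : Subgroup (MulAut P)) (hG : Nat.Coprime (Nat.card G) p)
    (hexp : p ^ a ∣ Monoid.exponent P) :
    p ^ (a - 1) ≤ Nat.card {ω : MulAction.orbitRel.Quotient G P //
      ∃ x : P, orderOf x = p ^ a ∧ Quotient.mk'' x = ω} :=
  stmt_4_general p a hp P G hG hexp
end

section
/- Let p be a prime, P a cyclic group of order p^b, and A a group of automorphisms of P of order p - 1 acting on P, with G = A ⋉ P the semidirect product. Then for every integer a with 1 ≤ a ≤ b, the number of conjugacy classes of G consisting of elements whose order has p-part exactly p^a equals p^(a-1). -/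
/-!
Write `P = ℤ/p^b` multiplicatively. Each automorphism of `P` is multiplication by a unit `u`, and
for `u ≠ 1` with `u ^ (p - 1) = 1` the element `u - 1` is again a unit: otherwise `u - 1` is
nilpotent and `0 = u ^ (p - 1) - 1 = (u - 1) · (p - 1 + nilpotent)` forces `u = 1`. So `A` acts
fixed-point-freely on `P ∖ {1}`. Consequently every element of `G` outside `P` is conjugate into
`A` and has order prime to `p`, while the classes of `G` inside `P` are the `A`-orbits, all of size
`p - 1`. The `φ(p^a) = p^(a-1) (p - 1)` elements of order `p^a` thus form `p^(a-1)` classes.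
-/

open Multiplicative Finset

theorem eq_one_of_pow_eq_one_of_isNilpotent_sub_one {R : Type*} [CommRing R] {u : R} {m : ℕ}
    (hu : u ^ m = 1) (hm : IsUnit (m : R)) (hnil : IsNilpotent (u - 1)) : u = 1 := by
  have hsum : IsUnit (∑ i ∈ range m, u ^ i) := by
    have : ∑ i ∈ range m, u ^ i = m + ∑ i ∈ range m, (u ^ i - 1) := by simp
    rw [this]
    refine (isNilpotent_sum fun i _ => ?_).isUnit_add_left_of_commute hm (Commute.all _ _)
    obtain ⟨c, hc⟩ := sub_one_dvd_pow_sub_one u i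
    exact hc ▸ (Commute.all _ c).isNilpotent_mul_right hnil
  rw [← sub_eq_zero, ← hsum.mul_left_eq_zero, mul_geom_sum, hu, sub_self]

theorem ZMod.isNilpotent_of_not_isUnit {p b : ℕ} (hp : p.Prime) {x : ZMod (p ^ b)}
    (hx : ¬IsUnit x) : IsNilpotent x := by
  have : NeZero (p ^ b) := ⟨pow_ne_zero _ hp.ne_zero⟩
  have hdvd : p ∣ x.val := by
    rw [← ZMod.natCast_zmod_val x, ZMod.isUnit_iff_coprime] at hx
    by_contra h
    exact hx (Nat.Coprime.pow_right b (hp.coprime_iff_not_dvd.mpr h).symm)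
  refine ⟨b, ?_⟩
  rw [← ZMod.natCast_zmod_val x, ← Nat.cast_pow, ZMod.natCast_eq_zero_iff]
  exact pow_dvd_pow_of_dvd hdvd b

theorem ZMod.isUnit_sub_one_of_pow_eq_one {p b : ℕ} (hp : p.Prime) {u : ZMod (p ^ b)}
    (hu : u ^ (p - 1) = 1) (hne : u ≠ 1) : IsUnit (u - 1) := by
  by_contra hunit
  refine hne (eq_one_of_pow_eq_one_of_isNilpotent_sub_one hu ?_
    (ZMod.isNilpotent_of_not_isUnit hp hunit))
  rw [ZMod.isUnit_iff_coprime]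
  exact Nat.Coprime.pow_right b ((Nat.coprime_self_sub_left hp.one_le).mpr (Nat.coprime_one_left p))

theorem ZMod.card_orderOf_eq_totient {n d : ℕ} [NeZero n] (hd : d ∣ n) :
    Nat.card {x : Multiplicative (ZMod n) | orderOf x = d} = d.totient := by
  classical
  rw [Nat.card_eq_fintype_card, Fintype.card_subtype,
    ← IsCyclic.card_orderOf_eq_totient (α := Multiplicative (ZMod n))
      (by simpa [ZMod.card] using hd)]
  rfl

theorem ZMod.factorization_orderOf_eq_iff {p b a : ℕ} (hp : p.Prime)
    (x : Multiplicative (ZMod (p ^ b))) :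
    (orderOf x).factorization p = a ↔ orderOf x = p ^ a := by
  have : NeZero (p ^ b) := ⟨pow_ne_zero _ hp.ne_zero⟩
  have hdvd : orderOf x ∣ p ^ b := by
    simpa [Nat.card_eq_fintype_card, ZMod.card] using orderOf_dvd_natCard x
  obtain ⟨k, -, hk⟩ := (Nat.dvd_prime_pow hp).mp hdvd
  rw [hk, hp.factorization_pow, Finsupp.single_eq_same, (Nat.pow_right_injective hp.two_le).eq_iff]

def ZMod.mulAutEquivUnits (n : ℕ) : MulAut (Multiplicative (ZMod n)) ≃* (ZMod n)ˣ :=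
  (MulAutMultiplicative (ZMod n)).trans (ZMod.AddAutEquivUnits n).toMultiplicative

theorem ZMod.toAdd_mulAut_apply {n : ℕ} (α : MulAut (Multiplicative (ZMod n)))
    (x : Multiplicative (ZMod n)) : (α x).toAdd = ZMod.mulAutEquivUnits n α * x.toAdd := by
  set f : ZMod n ≃+ ZMod n := AddEquiv.toMultiplicative.symm α
  change f x.toAdd = f 1 * x.toAdd
  rw [mul_comm, ← (toAdd x).intCast_zmod_cast, ← zsmul_eq_mul, ← map_zsmul, zsmul_one]

theorem ZMod.eq_one_of_mulAut_apply_eq_self {p b : ℕ} (hp : p.Prime)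
    {α : MulAut (Multiplicative (ZMod (p ^ b)))} (hα : α ^ (p - 1) = 1) (hne : α ≠ 1)
    {x : Multiplicative (ZMod (p ^ b))} (hx : α x = x) : x = 1 := by
  set u := ZMod.mulAutEquivUnits (p ^ b) α
  have hu : (u : ZMod (p ^ b)) ^ (p - 1) = 1 := by
    rw [← Units.val_pow_eq_pow_val, ← map_pow, hα, map_one, Units.val_one]
  have hu1 : (u : ZMod (p ^ b)) ≠ 1 := by
    rwa [ne_eq, Units.val_eq_one, MulEquiv.map_eq_one_iff]
  have hker : ((u : ZMod (p ^ b)) - 1) * x.toAdd = 0 := by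
    rw [sub_one_mul, ← ZMod.toAdd_mulAut_apply, hx, sub_self]
  exact toAdd_eq_zero.mp ((ZMod.isUnit_sub_one_of_pow_eq_one hp hu hu1).mul_right_eq_zero.mp hker)

namespace SemidirectProduct

variable {N H : Type*} [Group H]

theorem orderOf_inl [Group N] {φ : H →* MulAut N} (x : N) :
    orderOf (inl x : N ⋊[φ] H) = orderOf x :=
  orderOf_injective inl inl_injective x

theorem isConj_inr_right [Group N] [Finite N] {φ : H →* MulAut N} (g : N ⋊[φ] H)
    (hfree : ∀ n, φ g.right n = n → n = 1) : IsConj g (inr g.right) := by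
  have hinj : Function.Injective fun y : N => y⁻¹ * φ g.right y := by
    intro y z hyz
    have : φ g.right (z * y⁻¹) = z * y⁻¹ := by
      simp only at hyz
      rw [map_mul, map_inv, ← mul_inv_cancel_left y (φ g.right y), hyz]
      group
    exact (mul_inv_eq_one.mp (hfree _ this)).symm
  obtain ⟨y, hy⟩ := Finite.surjective_of_injective hinj g.left
  refine isConj_iff.mpr ⟨inl y, SemidirectProduct.ext ?_ ?_⟩
  · simp [← hy]
  · simp

theorem orderOf_eq_orderOf_right [Group N] [Finite N] {φ : H →* MulAut N} (g : N ⋊[φ] H)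
    (hfree : ∀ n, φ g.right n = n → n = 1) : orderOf g = orderOf g.right := by
  obtain ⟨c, hc⟩ := isConj_inr_right g hfree
  rw [hc.orderOf_eq, orderOf_injective inr inr_injective]

theorem exists_inl_eq_of_dvd_orderOf [Group N] [Finite N] {φ : H →* MulAut N}
    (hfree : ∀ h ≠ 1, ∀ n, φ h n = n → n = 1) {p : ℕ} (hp : ¬p ∣ Nat.card H)
    {g : N ⋊[φ] H} (hg : p ∣ orderOf g) : ∃ x, inl x = g := by
  have hright : g.right = 1 := by
    by_contra hne
    rw [orderOf_eq_orderOf_right g (hfree _ hne)] at hg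
    exact hp (hg.trans (orderOf_dvd_natCard _))
  exact ⟨g.left, by conv_rhs => rw [← inl_left_mul_inr_right g, hright, map_one, mul_one]⟩

theorem isConj_inl_inl_iff [CommGroup N] {φ : H →* MulAut N} {x y : N} :
    IsConj (inl x : N ⋊[φ] H) (inl y) ↔ ∃ h, φ h x = y := by
  rw [isConj_iff]
  constructor
  · rintro ⟨c, hc⟩
    exact ⟨c.right, by simpa using congrArg left hc⟩
  · rintro ⟨h, rfl⟩
    exact ⟨inr h, by rw [← map_inv, inl_aut]⟩

/-- The fibres of `x ↦ [inl x]` are the `H`-orbits, which are regular since `H` acts freely. -/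
theorem card_conjClasses_inl_mul_card [CommGroup N] {φ : H →* MulAut N}
    (hfree : ∀ h ≠ 1, ∀ n, φ h n = n → n = 1) {S : Set N} (hS1 : 1 ∉ S)
    (hS : ∀ h, ∀ x ∈ S, φ h x ∈ S) :
    Nat.card {C : ConjClasses (N ⋊[φ] H) // ∃ x ∈ S, ConjClasses.mk (inl x) = C} * Nat.card H
      = Nat.card S := by
  set T := {C : ConjClasses (N ⋊[φ] H) // ∃ x ∈ S, ConjClasses.mk (inl x) = C}
  let q : S → T := fun x => ⟨ConjClasses.mk (inl x.1), x.1, x.2, rfl⟩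
  have hq {x y : S} : q x = q y ↔ ∃ h, φ h y = x := by
    rw [Subtype.ext_iff, ConjClasses.mk_eq_mk_iff_isConj, isConj_comm, isConj_inl_inl_iff]
  have hfiber (t : T) : Nonempty (H ≃ {s // q s = t}) := by
    obtain ⟨x₀, rfl⟩ : ∃ x₀, q x₀ = t := by
      obtain ⟨_, x₀, hx₀, rfl⟩ := t
      exact ⟨⟨x₀, hx₀⟩, rfl⟩
    refine ⟨.ofBijective (fun h => ⟨⟨φ h x₀, hS h x₀ x₀.2⟩, hq.mpr ⟨h, rfl⟩⟩) ⟨?_, ?_⟩⟩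
    · intro h k hhk
      have hx₀ : φ (k⁻¹ * h) x₀ = x₀ := by
        simp only [Subtype.mk.injEq] at hhk
        rw [map_mul, MulAut.mul_apply, hhk, map_inv, MulAut.inv_apply_self]
      by_contra hne
      exact hS1 (hfree _ (by rwa [ne_eq, inv_mul_eq_one, eq_comm]) _ hx₀ ▸ x₀.2)
    · rintro ⟨s, hs⟩
      obtain ⟨h, hh⟩ := hq.mp hs
      exact ⟨h, Subtype.ext (Subtype.ext hh)⟩
  calc Nat.card T * Nat.card H = Nat.card (Σ t : T, {s // q s = t}) := by
        rw [← Nat.card_prod, Nat.card_congr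
          ((Equiv.sigmaEquivProd T H).symm.trans (Equiv.sigmaCongrRight fun t => (hfiber t).some))]
    _ = Nat.card S := Nat.card_congr (Equiv.sigmaFiberEquiv q)

end SemidirectProduct

open SemidirectProduct in
theorem stmt_6_general (p b : ℕ) (hp : p.Prime)
    (A : Subgroup (MulAut (Multiplicative (ZMod (p ^ b)))))
    (hA : Nat.card A = p - 1)
    (a : ℕ) (ha1 : 1 ≤ a) (hab : a ≤ b) :
    Nat.card {C : ConjClasses (Multiplicative (ZMod (p ^ b)) ⋊[A.subtype] A) //
      ∃ g, ConjClasses.mk g = C ∧ (orderOf g).factorization p = a} = p ^ (a - 1) := by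
  have : NeZero (p ^ b) := ⟨pow_ne_zero _ hp.ne_zero⟩
  have h2p := hp.two_le
  have hfree (β : A) (hβ : β ≠ 1) (x) (hx : A.subtype β x = x) : x = 1 :=
    ZMod.eq_one_of_mulAut_apply_eq_self hp (by rw [← map_pow, ← hA, pow_card_eq_one', map_one])
      (by simpa using hβ) hx
  have hp_not_dvd : ¬p ∣ Nat.card A := fun h => by
    have := Nat.le_of_dvd (by omega) (hA ▸ h)
    omega
  have hclasses (C : ConjClasses (Multiplicative (ZMod (p ^ b)) ⋊[A.subtype] A)) :
      (∃ g, ConjClasses.mk g = C ∧ (orderOf g).factorization p = a) ↔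
        ∃ x ∈ {x | orderOf x = p ^ a}, ConjClasses.mk (inl x) = C := by
    simp only [Set.mem_ofPred_eq, ← ZMod.factorization_orderOf_eq_iff hp]
    constructor
    · rintro ⟨g, rfl, hg⟩
      have hdvd : p ∣ orderOf g := Nat.dvd_of_factorization_pos (by omega)
      obtain ⟨x, rfl⟩ := exists_inl_eq_of_dvd_orderOf hfree hp_not_dvd hdvd
      exact ⟨x, by rwa [orderOf_inl] at hg, rfl⟩
    · rintro ⟨x, hx, rfl⟩
      exact ⟨inl x, rfl, by rwa [orderOf_inl]⟩
  have hcount := card_conjClasses_inl_mul_card hfree (S := {x | orderOf x = p ^ a}) ?_ ?_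
  · rw [← Nat.card_congr (Equiv.subtypeEquivRight hclasses), hA,
      ZMod.card_orderOf_eq_totient (pow_dvd_pow p hab), Nat.totient_prime_pow hp ha1] at hcount
    exact Nat.eq_of_mul_eq_mul_right (by omega) hcount
  · simpa using (Nat.one_lt_pow (by omega) hp.one_lt).ne
  · intro β x hx
    rwa [Set.mem_ofPred_eq, MulEquiv.orderOf_eq]

theorem stmt_6 (p b : ℕ) (hp : p.Prime) (hb : 1 ≤ b)
    (A : Subgroup (MulAut (Multiplicative (ZMod (p ^ b)))))
    (hA : Nat.card A = p - 1)
    (a : ℕ) (ha1 : 1 ≤ a) (hab : a ≤ b) :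
    Nat.card {C : ConjClasses (Multiplicative (ZMod (p ^ b)) ⋊[A.subtype] A) //
      ∃ g, ConjClasses.mk g = C ∧ (orderOf g).factorization p = a} = p ^ (a - 1) :=
  stmt_6_general p b hp A hA a ha1 hab
end

section
/- Let p be a prime, P a finite abelian p-group, and H a finite group of order coprime to p acting on P by automorphisms. In the semidirect product G = H ⋉ P, two elements of P are conjugate in G if and only if they lie in the same H-orbit; consequently the number of conjugacy classes of G contained in P equals the number of H-orbits on P. -/
/-!
Because `P` is abelian, conjugating `inl x` by `⟨n, h⟩` only sees the `H`-component:
`⟨n, h⟩ * inl x * ⟨n, h⟩⁻¹ = inl (φ h x)`. Hence `inl x` and `inl y` are conjugate exactly when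
`y` lies in the `H`-orbit of `x`: the fibres of `x ↦ [inl x]`, whose image is the set of conjugacy
classes meeting `P`, are the `H`-orbits.
-/

namespace SemidirectProduct

variable {N G : Type*} [CommGroup N] [Group G] {φ : G →* MulAut N}

theorem mul_inl_mul_inv (g : N ⋊[φ] G) (x : N) :
    g * inl x * g⁻¹ = inl (φ g.right x) := by
  ext <;> simp [mul_comm, mul_assoc]

theorem isConj_inl_iff {x y : N} :
    IsConj (inl x : N ⋊[φ] G) (inl y) ↔ ∃ g : G, φ g x = y := by
  simp only [isConj_iff, mul_inl_mul_inv, inl_inj]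
  exact ⟨fun ⟨g, hg⟩ => ⟨g.right, hg⟩, fun ⟨g, hg⟩ => ⟨inr g, hg⟩⟩

theorem orbitRel_compHom_iff_conjClassesMk_inl_eq (x y : N) :
    letI := MulAction.compHom N φ
    MulAction.orbitRel G N x y ↔ ConjClasses.mk (inl x : N ⋊[φ] G) = ConjClasses.mk (inl y) := by
  rw [ConjClasses.mk_eq_mk_iff_isConj, isConj_comm, isConj_inl_iff]
  rfl

end SemidirectProduct

theorem stmt_8_general
    (P : Type*) [CommGroup P]
    (H : Type*) [Group H]
    (φ : H →* MulAut P) :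
    (∀ x y : P, IsConj (SemidirectProduct.inl x : P ⋊[φ] H) (SemidirectProduct.inl y) ↔
        ∃ h : H, φ h x = y) ∧
    (letI : MulAction H P := MulAction.compHom P φ
     Nat.card {C : ConjClasses (P ⋊[φ] H) //
        ∃ x : P, ConjClasses.mk (SemidirectProduct.inl x : P ⋊[φ] H) = C} =
      Nat.card (MulAction.orbitRel.Quotient H P)) := by
  refine ⟨fun x y => SemidirectProduct.isConj_inl_iff, ?_⟩
  exact Nat.card_congr <| (Setoid.quotientKerEquivRange _).symm.trans <|
    Quotient.congrRight fun x y =>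
      (SemidirectProduct.orbitRel_compHom_iff_conjClassesMk_inl_eq x y).symm

theorem stmt_8 (p : ℕ) (hp : p.Prime)
    (P : Type*) [CommGroup P] [Fintype P] (hP : IsPGroup p P)
    (H : Type*) [Group H] [Fintype H] (hH : Nat.Coprime (Nat.card H) p)
    (φ : H →* MulAut P) :
    (∀ x y : P, IsConj (SemidirectProduct.inl x : P ⋊[φ] H) (SemidirectProduct.inl y) ↔
        ∃ h : H, φ h x = y) ∧
    (letI : MulAction H P := MulAction.compHom P φ
     Nat.card {C : ConjClasses (P ⋊[φ] H) //
        ∃ x : P, ConjClasses.mk (SemidirectProduct.inl x : P ⋊[φ] H) = C} =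
      Nat.card (MulAction.orbitRel.Quotient H P)) :=
  stmt_8_general P H φ
end

section
/- Let G be a finite group, p a prime, and P a Sylow p-subgroup of G. If two elements x, y of the center Z(P) are conjugate in G, then they are conjugate in the normalizer N_G(P). -/
open Subgroup

theorem Subgroup.coe_mem_centralizer_of_mem_center {G : Type*} [Group G] {H : Subgroup G} {x : H}
    (hx : x ∈ center H) : (x : G) ∈ centralizer (H : Set G) :=
  fun g hg => congrArg Subtype.val (mem_center_iff.mp hx ⟨g, hg⟩)

/-- If `y = c * x * c⁻¹`, then `P` and `c⁻¹ • P` are Sylow subgroups of the centralizer of `x`,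
hence conjugate by some `h` there, and `n = (h * c⁻¹)⁻¹` normalizes `P` and still conjugates `x`
to `y`. -/
theorem Sylow.exists_mem_normalizer_conj_eq_of_isConj {p : ℕ} [Fact p.Prime] {G : Type*} [Group G]
    [Finite (Sylow p G)] (P : Sylow p G) {x y : G} (hx : x ∈ centralizer (P : Set G))
    (hy : y ∈ centralizer (P : Set G)) (hxy : IsConj x y) :
    ∃ n ∈ normalizer (P : Set G), n * x * n⁻¹ = y := by
  obtain ⟨c, rfl⟩ := isConj_iff.mp hxy
  have hy' : c⁻¹⁻¹ * x * c⁻¹ ∈ centralizer (P : Set G) := by rwa [inv_inv]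
  obtain ⟨n, hn, hconj⟩ := P.conj_eq_normalizer_conj_of_mem_centralizer x c⁻¹ hx hy'
  exact ⟨n⁻¹, inv_mem hn, by rw [inv_inv, ← hconj, inv_inv]⟩

theorem stmt_9 (p : ℕ) [Fact p.Prime]
    (G : Type*) [Group G] [Fintype G] (P : Sylow p G)
    (x y : ↥(P : Subgroup G))
    (hx : x ∈ Subgroup.center ↥(P : Subgroup G))
    (hy : y ∈ Subgroup.center ↥(P : Subgroup G))
    (h : IsConj (x : G) (y : G)) :
    ∃ n ∈ Subgroup.normalizer ((P : Subgroup G) : Set G), n * (x : G) * n⁻¹ = (y : G) :=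
  P.exists_mem_normalizer_conj_eq_of_isConj (coe_mem_centralizer_of_mem_center hx)
    (coe_mem_centralizer_of_mem_center hy) h
end

section
/- Let p be a prime, P a finite abelian p-group, and G a group of order coprime to p acting faithfully on P by automorphisms. Then G acts faithfully on Ω_1(P), the subgroup of elements of order dividing p. -/
/-!
Let `σ` be an automorphism of the abelian `p`-group `P` with `σ ^ n = 1`, `n` coprime to `p`,
fixing every element of exponent `p`. If `σ` fixes `x ^ p`, then `t = x⁻¹ * σ x` satisfies
`t ^ p = 1`, so `σ` fixes `t` and `σ ^ j` sends `x` to `x * t ^ j`; taking `j = n` gives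
`t ^ n = 1`, hence `t = 1`. Induction on the order of `x` shows that `σ` is trivial.
-/

namespace MulAut

variable {P : Type*} [CommGroup P] (σ : MulAut P)

lemma pow_apply_eq_mul_pow {x t : P} (hx : σ x = x * t) (ht : σ t = t) (j : ℕ) :
    (σ ^ j) x = x * t ^ j := by
  induction j with
  | zero => simp
  | succ j ih => rw [pow_succ', mul_apply, ih, map_mul, map_pow, ht, hx, pow_succ', mul_assoc]

variable {σ} {n p : ℕ} (hnp : n.Coprime p) (hσ : σ ^ n = 1) (hfix : ∀ y : P, y ^ p = 1 → σ y = y)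
include hnp hσ hfix

lemma apply_eq_of_apply_pow_eq {x : P} (hxp : σ (x ^ p) = x ^ p) : σ x = x := by
  set t := x⁻¹ * σ x
  have hx : σ x = x * t := (mul_inv_cancel_left x (σ x)).symm
  have htp : t ^ p = 1 := by rw [mul_pow, ← map_pow, hxp, inv_pow, inv_mul_cancel]
  have htn : t ^ n = 1 := by
    have := pow_apply_eq_mul_pow σ hx (hfix t htp) n
    rwa [hσ, one_apply, left_eq_mul] at this
  have ht : t = 1 := by simpa [hnp.gcd_eq_one] using pow_gcd_eq_one.mpr ⟨htn, htp⟩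
  rw [hx, ht, mul_one]

lemma eq_one_of_isPGroup (hP : IsPGroup p P) : σ = 1 := by
  ext x
  obtain ⟨k, hk⟩ := hP x
  induction k generalizing x with
  | zero => rw [pow_zero, pow_one] at hk; simp [hk]
  | succ k ih =>
    refine apply_eq_of_apply_pow_eq hnp hσ hfix (ih (x ^ p) ?_)
    rwa [← pow_mul, ← pow_succ']

end MulAut

theorem stmt_11_general (p : ℕ)
    (P : Type*) [CommGroup P] (hP : IsPGroup p P)
    (G : Type*) [Group G] (hG : Nat.Coprime (Nat.card G) p)
    (φ : G →* MulAut P) (hfaithful : Function.Injective φ) :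
    ∀ g : G, (∀ x : P, x ^ p = 1 → φ g x = x) → g = 1 := by
  intro g hg
  apply hfaithful
  rw [map_one]
  exact MulAut.eq_one_of_isPGroup hG (by rw [← map_pow, pow_card_eq_one', map_one]) hg hP

theorem stmt_11 (p : ℕ) (hp : p.Prime)
    (P : Type*) [CommGroup P] [Fintype P] (hP : IsPGroup p P)
    (G : Type*) [Group G] [Fintype G] (hG : Nat.Coprime (Nat.card G) p)
    (φ : G →* MulAut P) (hfaithful : Function.Injective φ) :
    ∀ g : G, (∀ x : P, x ^ p = 1 → φ g x = x) → g = 1 :=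
  stmt_11_general p P hP G hG φ hfaithful
end
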